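/- Fix n : ℕ with n ≥ 1 and γ : ℝ. With B', R, u, ψ_f as in the ramp setup (ψ_f = (Matrix.exp (I·(π/4)·B') * Matrix.exp (-I·γ·R)).mulVec u), for every w : ℕ with w ≤ n, the total probability of measuring a string of Hamming weight w satisfies ∑_{z : |z| = w} ‖ψ_f z‖² = (Nat.choose n w) · ((1 + Real.sin γ)/2)^(n - w) · ((1 - Real.sin γ)/2)^w. -/

import Mathlib

open Matrix Complex

/-! The circuit acts qubit by qubit. The phase `exp (-iγR)` multiplies each bit by `e^{-iγ z_j}`,
and since the `X_i` commute and square to `1`, `exp (i π/4 B') = ∏ᵢ (cos (π/4) + i sin (π/4) Xᵢ)`.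
Starting from the uniform product state, `ψ_f` is therefore the product state `z ↦ ∏ⱼ a (z j)`
with `|a true|² = (1 - sin γ)/2` and `|a false|² = (1 + sin γ)/2`: the Hamming weight of the
measured string is binomially distributed. -/

/-- The bit-flip (Pauli X on qubit `i`) matrix on `n`-bit strings. -/
noncomputable def pauliX (n : ℕ) (i : Fin n) :
    Matrix (Fin n → Bool) (Fin n → Bool) ℂ :=
  Matrix.of fun z z' => if z' = Function.update z i (!(z i)) then 1 else 0

/-- The Hamming weight of a bitstring: the number of `true` bits. -/
def hammingWeight {n : ℕ} (z : Fin n → Bool) : ℕ :=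
  (Finset.univ.filter fun i => z i = true).card

open Finset

theorem exp_smul_of_mul_self_eq_one {A : Type*} [Ring A] [Algebra ℂ A] [TopologicalSpace A]
    [IsTopologicalRing A] [T2Space A] [ContinuousSMul ℂ A] {M : A} (h : M * M = 1) (c : ℂ) :
    NormedSpace.exp (c • M) = cosh c • (1 : A) + sinh c • M := by
  have h_even : ∀ k : ℕ, M ^ (2 * k) = 1 := fun k => by rw [pow_mul, sq, h, one_pow]
  rw [NormedSpace.exp_eq_tsum (𝕂 := ℂ)]
  refine HasSum.tsum_eq (HasSum.even_add_odd ?_ ?_)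
  · convert (hasSum_cosh c).smul_const (1 : A) using 2 with k
    rw [smul_pow, h_even, smul_smul, inv_mul_eq_div]
  · convert (hasSum_sinh c).smul_const M using 2 with k
    rw [smul_pow, pow_succ M, h_even, one_mul, smul_smul, inv_mul_eq_div]

theorem exp_smul_diagonal {m : Type*} [Fintype m] [DecidableEq m] (c : ℂ) (d : m → ℂ) :
    NormedSpace.exp (c • diagonal d) = diagonal fun z => exp (c * d z) := by
  rw [← diagonal_smul, Matrix.exp_diagonal, Pi.exp_def]
  simp [← Complex.exp_eq_exp_ℂ]

theorem prod_comp_eq_pow_hammingWeight_mul {M : Type*} [CommMonoid M] {n : ℕ} (q : Bool → M)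
    (z : Fin n → Bool) :
    ∏ j, q (z j) = q true ^ hammingWeight z * q false ^ (n - hammingWeight z) := by
  have h_false : (univ.filter fun j => ¬z j = true).card = n - hammingWeight z := by
    rw [filter_not, card_sdiff_of_subset (filter_subset _ _), card_univ, Fintype.card_fin]
    rfl
  rw [← prod_filter_mul_prod_filter_not univ (fun j => z j = true), ← h_false, hammingWeight,
    ← prod_const, ← prod_const]
  congr 1 <;> refine prod_congr rfl fun j hj => ?_ <;> simp_all

theorem card_filter_hammingWeight_eq (n w : ℕ) :
    (univ.filter fun z : Fin n → Bool => hammingWeight z = w).card = n.choose w := by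
  rw [← Fintype.card_fin n, ← card_univ, ← card_powersetCard, card_univ, Fintype.card_fin]
  refine card_bij' (fun z _ => univ.filter fun i => z i = true) (fun S _ i => decide (i ∈ S))
    ?_ ?_ ?_ ?_
  · intro z hz
    exact mem_powersetCard.2 ⟨subset_univ _, (mem_filter.1 hz).2⟩
  · intro S hS
    refine mem_filter.2 ⟨mem_univ _, ?_⟩
    simpa [hammingWeight] using (mem_powersetCard.1 hS).2
  · intro z _
    simp
  · intro S _
    simp

def flipBit {n : ℕ} (i : Fin n) (z : Fin n → Bool) : Fin n → Bool :=
  Function.update z i (!z i)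

theorem flipBit_flipBit {n : ℕ} (i : Fin n) (z : Fin n → Bool) : flipBit i (flipBit i z) = z := by
  simp [flipBit]

theorem flipBit_comm {n : ℕ} (i j : Fin n) (z : Fin n → Bool) :
    flipBit i (flipBit j z) = flipBit j (flipBit i z) := by
  funext k
  by_cases hki : k = i <;> by_cases hkj : k = j <;> simp_all [flipBit, Function.update_apply]

theorem pauliX_apply {n : ℕ} (i : Fin n) (z z' : Fin n → Bool) :
    pauliX n i z z' = if z' = flipBit i z then 1 else 0 :=
  rfl

theorem pauliX_mul_pauliX {n : ℕ} (i j : Fin n) :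
    pauliX n i * pauliX n j = of fun z z' => if z' = flipBit j (flipBit i z) then 1 else 0 := by
  ext z z'
  simp only [pauliX_apply, mul_apply, of_apply, ite_mul, one_mul, zero_mul, sum_ite_eq',
    mem_univ, if_true]

theorem pauliX_mul_self {n : ℕ} (i : Fin n) : pauliX n i * pauliX n i = 1 := by
  ext z z'
  simp [pauliX_mul_pauliX, flipBit_flipBit, one_apply, eq_comm]

theorem pauliX_commute {n : ℕ} (i j : Fin n) : Commute (pauliX n i) (pauliX n j) := by
  simp only [Commute, SemiconjBy, pauliX_mul_pauliX, flipBit_comm]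

theorem pauliX_mulVec {n : ℕ} (i : Fin n) (v : (Fin n → Bool) → ℂ) :
    pauliX n i *ᵥ v = fun z => v (flipBit i z) := by
  funext z
  simp [pauliX_apply, mulVec, dotProduct]

section ProductState

variable {ι M : Type*} [Fintype ι] [DecidableEq ι] [CommMonoid M]

def productState (f : ι → Bool → M) (z : ι → Bool) : M :=
  ∏ j, f j (z j)

theorem productState_update_left (f : ι → Bool → M) (i : ι) (g : Bool → M) (z : ι → Bool) :
    productState (Function.update f i g) z = g (z i) * ∏ j ∈ univ.erase i, f j (z j) := by
  simp only [productState, Function.apply_update (fun j (h : Bool → M) => h (z j)),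
    prod_update_of_mem (mem_univ i), sdiff_singleton_eq_erase]

theorem productState_update_right (f : ι → Bool → M) (z : ι → Bool) (i : ι) (b : Bool) :
    productState f (Function.update z i b) = f i b * ∏ j ∈ univ.erase i, f j (z j) := by
  simp only [productState, Function.apply_update f, prod_update_of_mem (mem_univ i),
    sdiff_singleton_eq_erase]

end ProductState

noncomputable def mixAmplitude (c : ℂ) (g : Bool → ℂ) (b : Bool) : ℂ :=
  cosh c * g b + sinh c * g (!b)

theorem exp_smul_pauliX_mulVec_productState {n : ℕ} (c : ℂ) (i : Fin n)
    (f : Fin n → Bool → ℂ) :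
    NormedSpace.exp (c • pauliX n i) *ᵥ productState f =
      productState (Function.update f i (mixAmplitude c (f i))) := by
  rw [exp_smul_of_mul_self_eq_one (pauliX_mul_self i), add_mulVec, smul_mulVec, smul_mulVec,
    one_mulVec, pauliX_mulVec]
  funext z
  have h_z : productState f z = f i (z i) * ∏ j ∈ univ.erase i, f j (z j) := by
    simpa using productState_update_right f z i (z i)
  simp only [Pi.add_apply, Pi.smul_apply, smul_eq_mul, flipBit, h_z, productState_update_right,
    productState_update_left, mixAmplitude]
  ring

theorem exp_smul_sum_pauliX_mulVec_productState {n : ℕ} (c : ℂ) (s : Finset (Fin n))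
    (f : Fin n → Bool → ℂ) :
    NormedSpace.exp (∑ i ∈ s, c • pauliX n i) *ᵥ productState f =
      productState (s.piecewise (fun j => mixAmplitude c (f j)) f) := by
  induction s using Finset.induction_on with
  | empty => simp
  | insert a s ha ih =>
    have h_comm : Commute (c • pauliX n a) (∑ i ∈ s, c • pauliX n i) :=
      Commute.sum_right _ _ _ fun i _ => ((pauliX_commute a i).smul_left c).smul_right c
    rw [sum_insert ha, Matrix.exp_add_of_commute _ _ h_comm, ← mulVec_mulVec, ih,
      exp_smul_pauliX_mulVec_productState, piecewise_eq_of_notMem _ _ _ ha, piecewise_insert]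

theorem diagonal_productState_mulVec_productState {ι : Type*} [Fintype ι] [DecidableEq ι]
    (d f : ι → Bool → ℂ) :
    diagonal (productState d) *ᵥ productState f = productState fun j b => d j b * f j b := by
  funext z
  simp only [mulVec_diagonal, productState, prod_mul_distrib]

theorem exp_smul_diagonal_hammingWeight {n : ℕ} (c : ℂ) :
    NormedSpace.exp (c • diagonal fun z : Fin n → Bool => (hammingWeight z : ℂ)) =
      diagonal (productState fun _ b => if b then exp c else 1) := by
  rw [exp_smul_diagonal]
  congr 1
  funext z
  rw [productState, prod_comp_eq_pow_hammingWeight_mul fun b => if b then exp c else 1]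
  simp [← Complex.exp_nat_mul, mul_comm]

theorem ofReal_two_rpow_neg_div_two_eq_prod {n : ℕ} :
    (((2 : ℝ) ^ (-(n : ℝ) / 2) : ℝ) : ℂ) = ∏ _j : Fin n, ((√2 : ℝ) : ℂ)⁻¹ := by
  rw [prod_const, card_univ, Fintype.card_fin, ← ofReal_inv, ← ofReal_pow, Real.sqrt_eq_rpow,
    ← Real.rpow_neg zero_le_two, ← Real.rpow_mul_natCast zero_le_two]
  ring_nf

theorem mixAmplitude_I_mul_pi_div_four (g : Bool → ℂ) (b : Bool) :
    mixAmplitude (I * ((Real.pi : ℂ) / 4)) g b = ((√2 / 2 : ℝ) : ℂ) * (g b + I * g (!b)) := by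
  have h : I * ((Real.pi : ℂ) / 4) = ((Real.pi / 4 : ℝ) : ℂ) * I := by push_cast; ring
  rw [mixAmplitude, h, cosh_mul_I, sinh_mul_I, ← ofReal_cos, ← ofReal_sin, Real.cos_pi_div_four,
    Real.sin_pi_div_four]
  ring

noncomputable def rampAmplitude (γ : ℝ) : Bool → ℂ :=
  mixAmplitude (I * ((Real.pi : ℂ) / 4)) fun b =>
    (if b then exp (-I * γ) else 1) * ((√2 : ℝ) : ℂ)⁻¹

theorem exp_neg_I_mul_ofReal (γ : ℝ) : exp (-I * γ) = Real.cos γ - Real.sin γ * I := by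
  rw [show -I * γ = ((-γ : ℝ) : ℂ) * I by push_cast; ring, exp_mul_I, ← ofReal_cos,
    ← ofReal_sin, Real.cos_neg, Real.sin_neg, ofReal_neg]
  ring

theorem rampAmplitude_apply (γ : ℝ) (b : Bool) :
    rampAmplitude γ b =
      ((if b then exp (-I * γ) else 1) + I * (if b then 1 else exp (-I * γ))) / 2 := by
  have h_sqrt : ((√2 : ℝ) : ℂ) ≠ 0 := by exact_mod_cast (by positivity : √2 ≠ 0)
  rw [rampAmplitude, mixAmplitude_I_mul_pi_div_four]
  cases b <;> simp only [Bool.not_true, Bool.not_false, Bool.false_eq_true, ↓reduceIte] <;>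
    push_cast <;> field_simp

theorem sq_norm_rampAmplitude_true (γ : ℝ) :
    ‖rampAmplitude γ true‖ ^ 2 = (1 - Real.sin γ) / 2 := by
  have h : rampAmplitude γ true =
      ((Real.cos γ / 2 : ℝ) : ℂ) + (((1 - Real.sin γ) / 2 : ℝ) : ℂ) * I := by
    simp only [rampAmplitude_apply, ↓reduceIte, exp_neg_I_mul_ofReal]
    push_cast
    ring
  rw [h, Complex.sq_norm, normSq_add_mul_I]
  nlinarith [Real.sin_sq_add_cos_sq γ]

theorem sq_norm_rampAmplitude_false (γ : ℝ) :
    ‖rampAmplitude γ false‖ ^ 2 = (1 + Real.sin γ) / 2 := by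
  have h : rampAmplitude γ false =
      (((1 + Real.sin γ) / 2 : ℝ) : ℂ) + ((Real.cos γ / 2 : ℝ) : ℂ) * I := by
    simp only [rampAmplitude_apply, Bool.false_eq_true, ↓reduceIte, exp_neg_I_mul_ofReal]
    push_cast
    linear_combination (-sin (γ : ℂ) / 2) * I_sq
  rw [h, Complex.sq_norm, normSq_add_mul_I]
  nlinarith [Real.sin_sq_add_cos_sq γ]

theorem sq_norm_productState_rampAmplitude {n : ℕ} (γ : ℝ) (z : Fin n → Bool) :
    ‖productState (fun _ => rampAmplitude γ) z‖ ^ 2 =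
      ((1 + Real.sin γ) / 2) ^ (n - hammingWeight z) *
        ((1 - Real.sin γ) / 2) ^ hammingWeight z := by
  rw [productState, norm_prod, ← prod_pow,
    prod_comp_eq_pow_hammingWeight_mul fun b => ‖rampAmplitude γ b‖ ^ 2,
    sq_norm_rampAmplitude_true, sq_norm_rampAmplitude_false, mul_comm]

theorem qaoa1_ramp_state_eq_productState (n : ℕ) (γ : ℝ) :
    (NormedSpace.exp ((I * ((Real.pi : ℂ) / 4)) • ∑ i, pauliX n i) *
        NormedSpace.exp ((-I * (γ : ℂ)) • diagonal fun z => (hammingWeight z : ℂ))) *ᵥ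
        (fun _ => (((2 : ℝ) ^ (-(n : ℝ) / 2) : ℝ) : ℂ)) =
      productState fun _ => rampAmplitude γ := by
  have h_init : (fun _ => (((2 : ℝ) ^ (-(n : ℝ) / 2) : ℝ) : ℂ)) =
      productState fun (_ : Fin n) _ => ((√2 : ℝ) : ℂ)⁻¹ :=
    funext fun _ => ofReal_two_rpow_neg_div_two_eq_prod
  rw [h_init, ← mulVec_mulVec, exp_smul_diagonal_hammingWeight,
    diagonal_productState_mulVec_productState, smul_sum,
    exp_smul_sum_pauliX_mulVec_productState, piecewise_univ]
  rfl

theorem qaoa1_ramp_weight_distribution_general (n : ℕ) (γ : ℝ)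
    (B' R : Matrix (Fin n → Bool) (Fin n → Bool) ℂ)
    (hB' : B' = ∑ i, pauliX n i)
    (hR : R = Matrix.diagonal fun z => (hammingWeight z : ℂ))
    (u : (Fin n → Bool) → ℂ)
    (hu : u = fun _ => (((2 : ℝ) ^ (-(n : ℝ) / 2) : ℝ) : ℂ))
    (ψf : (Fin n → Bool) → ℂ)
    (hψf : ψf = (NormedSpace.exp ((Complex.I * ((Real.pi : ℂ) / 4)) • B') *
        NormedSpace.exp ((-Complex.I * (γ : ℂ)) • R)).mulVec u)
    (w : ℕ) :
    ∑ z ∈ Finset.univ.filter (fun z : Fin n → Bool => hammingWeight z = w),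
        ‖ψf z‖ ^ 2 =
      (Nat.choose n w : ℝ) * ((1 + Real.sin γ) / 2) ^ (n - w) *
        ((1 - Real.sin γ) / 2) ^ w := by
  subst hB' hR hu hψf
  rw [qaoa1_ramp_state_eq_productState]
  have h_term : ∀ z ∈ univ.filter (fun z : Fin n → Bool => hammingWeight z = w),
      ‖productState (fun _ => rampAmplitude γ) z‖ ^ 2 =
        ((1 + Real.sin γ) / 2) ^ (n - w) * ((1 - Real.sin γ) / 2) ^ w := by
    intro z hz
    rw [sq_norm_productState_rampAmplitude, (mem_filter.1 hz).2]
  rw [sum_congr rfl h_term, sum_const, card_filter_hammingWeight_eq, nsmul_eq_mul, mul_assoc]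

/-- The exact binomial output distribution of QAOA1 on the Hamming ramp: the
probability of measuring a string of Hamming weight `w` is
`C(n,w) ((1+sin γ)/2)^(n-w) ((1-sin γ)/2)^w`. -/
theorem qaoa1_ramp_weight_distribution (n : ℕ) (hn : 1 ≤ n) (γ : ℝ)
    (B' R : Matrix (Fin n → Bool) (Fin n → Bool) ℂ)
    (hB' : B' = ∑ i, pauliX n i)
    (hR : R = Matrix.diagonal fun z => (hammingWeight z : ℂ))
    (u : (Fin n → Bool) → ℂ)
    (hu : u = fun _ => (((2 : ℝ) ^ (-(n : ℝ) / 2) : ℝ) : ℂ))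
    (ψf : (Fin n → Bool) → ℂ)
    (hψf : ψf = (NormedSpace.exp ((Complex.I * ((Real.pi : ℂ) / 4)) • B') *
        NormedSpace.exp ((-Complex.I * (γ : ℂ)) • R)).mulVec u)
    (w : ℕ) (hw : w ≤ n) :
    ∑ z ∈ Finset.univ.filter (fun z : Fin n → Bool => hammingWeight z = w),
        ‖ψf z‖ ^ 2 =
      (Nat.choose n w : ℝ) * ((1 + Real.sin γ) / 2) ^ (n - w) *
        ((1 - Real.sin γ) / 2) ^ w :=
  qaoa1_ramp_weight_distribution_general n γ B' R hB' hR u hu ψf hψf w
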